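/- Let p, n ≥ 2 and s ≥ 1 be natural numbers, and let c₁, c₂, M₀ > 0 be constants. Let v ∈ ℝ^p be s-sparse with ‖v‖₂ = 1, let 𝒮 be a symmetric positive definite p×p real matrix with ‖𝒮⁻¹‖₁ ≤ M₀, let S be a symmetric p×p real matrix with ‖S − 𝒮‖_max ≤ c₁·√(log p / n), and let ṽ ∈ ℝ^p satisfy ‖S·ṽ − 𝒮·v‖_∞ ≤ c₂·√(log p / n). Let τₙ ≥ (c₂ + c₁·s)·√(log p / n), and let v̂ ∈ ℝ^p be a minimizer of ‖·‖₁ over the feasible set {w ∈ ℝ^p : ‖S·ṽ − S·w‖_∞ ≤ τₙ}. Then ‖v̂ − v‖₂ ≤ 4·(√(4 + 2·√10) + √10)·√s · M₀ · τₙ. -/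
import Mathlib


open scoped BigOperators

/-- The ℓ1 norm of a vector. -/
noncomputable def l1 {p : ℕ} (x : Fin p → ℝ) : ℝ := ∑ i, |x i|

/-- The Euclidean (ℓ2) norm of a vector. -/
noncomputable def l2 {p : ℕ} (x : Fin p → ℝ) : ℝ := Real.sqrt (∑ i, (x i) ^ 2)

/-- The ℓ∞ norm of a vector. -/
noncomputable def linf {p : ℕ} (x : Fin p → ℝ) : ℝ := ⨆ i, |x i|

/-- The max norm of a matrix: maximum absolute entry. -/
noncomputable def maxNorm {p q : ℕ} (A : Matrix (Fin p) (Fin q) ℝ) : ℝ := ⨆ i, ⨆ j, |A i j|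

/-- The matrix 1-norm: maximum absolute column sum. -/
noncomputable def colNorm1 {p : ℕ} (A : Matrix (Fin p) (Fin p) ℝ) : ℝ := ⨆ j, ∑ i, |A i j|

/-- A vector is `s`-sparse if it has at most `s` nonzero entries. -/
def Sparse {p : ℕ} (s : ℕ) (v : Fin p → ℝ) : Prop :=
  (Finset.univ.filter (fun i => v i ≠ 0)).card ≤ s

/-- Hard threshold of a vector at level `c`: keep entries with `|xᵢ| ≥ c`, zero out the rest. -/
noncomputable def hthresh {p : ℕ} (c : ℝ) (x : Fin p → ℝ) : Fin p → ℝ :=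
  fun i => if c ≤ |x i| then x i else 0

/- ### Auxiliary lemmas -/

lemma entry_le_maxNorm {p q : ℕ} (A : Matrix (Fin p) (Fin q) ℝ) (i : Fin p) (j : Fin q) :
    |A i j| ≤ maxNorm A := by
  have h1 : |A i j| ≤ ⨆ j', |A i j'| :=
    le_ciSup (f := fun j' => |A i j'|) (Set.Finite.bddAbove (Set.finite_range _)) j
  exact h1.trans (le_ciSup (f := fun i => ⨆ j, |A i j|)
    (Set.Finite.bddAbove (Set.finite_range _)) i)

lemma abs_le_linf {p : ℕ} (x : Fin p → ℝ) (i : Fin p) : |x i| ≤ linf x :=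
  le_ciSup (f := fun i => |x i|) (Set.Finite.bddAbove (Set.finite_range _)) i

lemma linf_le_of {p : ℕ} [Nonempty (Fin p)] (x : Fin p → ℝ) (a : ℝ)
    (h : ∀ i, |x i| ≤ a) : linf x ≤ a := ciSup_le h

lemma colsum_le_colNorm1 {p : ℕ} (A : Matrix (Fin p) (Fin p) ℝ) (j : Fin p) :
    ∑ i, |A i j| ≤ colNorm1 A :=
  le_ciSup (f := fun j => ∑ i, |A i j|) (Set.Finite.bddAbove (Set.finite_range _)) j

lemma abs_mulVec_le_sum {p : ℕ} (A : Matrix (Fin p) (Fin p) ℝ) (x : Fin p → ℝ) (i : Fin p) :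
    |A.mulVec x i| ≤ ∑ j, |A i j| * |x j| := by
  have : A.mulVec x i = ∑ j, A i j * x j := by
    simp [Matrix.mulVec, dotProduct]
  rw [this]
  refine (Finset.abs_sum_le_sum_abs _ _).trans ?_
  simp [abs_mul]

lemma abs_mulVec_le_maxNorm_l1 {p : ℕ} (A : Matrix (Fin p) (Fin p) ℝ) (x : Fin p → ℝ)
    (i : Fin p) : |A.mulVec x i| ≤ maxNorm A * l1 x := by
  refine (abs_mulVec_le_sum A x i).trans ?_
  rw [l1, Finset.mul_sum]
  exact Finset.sum_le_sum fun j _ =>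
    mul_le_mul_of_nonneg_right (entry_le_maxNorm A i j) (abs_nonneg _)

lemma abs_mulVec_le_colNorm1_bound {p : ℕ} (A : Matrix (Fin p) (Fin p) ℝ) (hA : A.IsSymm)
    (x : Fin p → ℝ) (b : ℝ) (hb : ∀ j, |x j| ≤ b) (i : Fin p) :
    |A.mulVec x i| ≤ colNorm1 A * b := by
  have hb0 : 0 ≤ b := (abs_nonneg _).trans (hb i)
  refine (abs_mulVec_le_sum A x i).trans ?_
  calc ∑ j, |A i j| * |x j| ≤ ∑ j, |A i j| * b :=
        Finset.sum_le_sum fun j _ => mul_le_mul_of_nonneg_left (hb j) (abs_nonneg _)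
    _ = (∑ j, |A j i|) * b := by
        rw [Finset.sum_mul]
        exact Finset.sum_congr rfl fun j _ => by rw [hA.apply i j]
    _ ≤ colNorm1 A * b := mul_le_mul_of_nonneg_right (colsum_le_colNorm1 A i) hb0

/-- Cauchy–Schwarz: the ℓ1 mass on a set of cardinality ≤ s is at most √s times the ℓ2 norm. -/
lemma sum_abs_le_sqrt_card {p s : ℕ} (x : Fin p → ℝ) (T : Finset (Fin p)) (hT : T.card ≤ s) :
    ∑ i ∈ T, |x i| ≤ Real.sqrt s * Real.sqrt (∑ i, x i ^ 2) := by
  have hCS := Finset.sum_mul_sq_le_sq_mul_sq T (fun _ => (1 : ℝ)) (fun i => |x i|)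
  simp only [one_pow, one_mul, sq_abs, Finset.sum_const, nsmul_eq_mul, mul_one] at hCS
  have hsub : ∑ i ∈ T, x i ^ 2 ≤ ∑ i, x i ^ 2 :=
    Finset.sum_le_sum_of_subset_of_nonneg (Finset.subset_univ T)
      (fun i _ _ => sq_nonneg _)
  have h1 : (∑ i ∈ T, |x i|) ^ 2 ≤ (s : ℝ) * ∑ i, x i ^ 2 := by
    refine hCS.trans ?_
    have hcard : (T.card : ℝ) ≤ (s : ℝ) := by exact_mod_cast hT
    have h2 : (0:ℝ) ≤ ∑ i ∈ T, x i ^ 2 := Finset.sum_nonneg fun i _ => sq_nonneg _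
    nlinarith [Finset.sum_nonneg (s := Finset.univ) (f := fun i => x i ^ 2)
      (fun i _ => sq_nonneg (x i))]
  have h0 : 0 ≤ ∑ i ∈ T, |x i| := Finset.sum_nonneg fun i _ => abs_nonneg _
  have := Real.sqrt_le_sqrt h1
  rwa [Real.sqrt_sq h0, Real.sqrt_mul (by positivity) ] at this

set_option maxHeartbeats 1600000 in
/-- SELP consistency in ℓ2 norm (Theorem 1, eq. (7) of the paper). -/
theorem selp_consistency_l2
    (p n s : ℕ) (hp : 2 ≤ p) (hn : 2 ≤ n) (hs : 1 ≤ s)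
    (c₁ c₂ M₀ : ℝ) (hc₁ : 0 < c₁) (hc₂ : 0 < c₂) (hM₀ : 0 < M₀)
    (v : Fin p → ℝ) (hv_sparse : Sparse s v) (hv_norm : l2 v = 1)
    (Scal : Matrix (Fin p) (Fin p) ℝ) (hScal_symm : Scal.IsSymm) (hScal_pd : Scal.PosDef)
    (hScal_inv : colNorm1 Scal⁻¹ ≤ M₀)
    (S : Matrix (Fin p) (Fin p) ℝ) (hS_symm : S.IsSymm)
    (hS_close : maxNorm (S - Scal) ≤ c₁ * Real.sqrt (Real.log p / n))
    (vtil : Fin p → ℝ)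
    (hvtil : linf (S.mulVec vtil - Scal.mulVec v) ≤ c₂ * Real.sqrt (Real.log p / n))
    (τ : ℝ) (hτ : (c₂ + c₁ * s) * Real.sqrt (Real.log p / n) ≤ τ)
    (vhat : Fin p → ℝ)
    (hfeas : linf (S.mulVec vtil - S.mulVec vhat) ≤ τ)
    (hmin : ∀ w : Fin p → ℝ, linf (S.mulVec vtil - S.mulVec w) ≤ τ → l1 vhat ≤ l1 w) :
    l2 (vhat - v) ≤ 4 * (Real.sqrt (4 + 2 * Real.sqrt 10) + Real.sqrt 10) *
      Real.sqrt s * M₀ * τ := by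
  haveI : Nonempty (Fin p) := ⟨⟨0, by omega⟩⟩
  set r := Real.sqrt (Real.log p / n) with hr_def
  have hr : 0 ≤ r := Real.sqrt_nonneg _
  have hs1 : (1:ℝ) ≤ (s:ℝ) := by exact_mod_cast hs
  have hss : Real.sqrt s ≤ (s:ℝ) := by
    nlinarith [Real.sq_sqrt (by linarith : (0:ℝ) ≤ (s:ℝ)), Real.sqrt_nonneg (s:ℝ)]
  have hsqs0 : 0 ≤ Real.sqrt s := Real.sqrt_nonneg _
  have hτ0 : (0:ℝ) ≤ τ := le_trans (by positivity) hτ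
  -- the support of v
  set T : Finset (Fin p) := Finset.univ.filter (fun i => v i ≠ 0) with hT_def
  have hTcard : T.card ≤ s := hv_sparse
  have hvzero : ∀ i ∉ T, v i = 0 := by
    intro i hi
    by_contra hne
    exact hi (Finset.mem_filter.mpr ⟨Finset.mem_univ i, hne⟩)
  -- ∑ v² = 1
  have hsumv : ∑ i, v i ^ 2 = 1 := by
    have h0 : (0:ℝ) ≤ ∑ i, v i ^ 2 := Finset.sum_nonneg fun i _ => sq_nonneg _
    have := hv_norm
    rw [l2] at this
    nlinarith [Real.sq_sqrt h0, this]
  -- l1 v ≤ √s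
  have hl1v : l1 v ≤ Real.sqrt s := by
    have heq : l1 v = ∑ i ∈ T, |v i| := by
      rw [l1]
      exact (Finset.sum_subset (Finset.subset_univ T)
        (fun i _ hi => by rw [hvzero i hi, abs_zero])).symm
    rw [heq]
    have := sum_abs_le_sqrt_card v T hTcard
    rwa [hsumv, Real.sqrt_one, mul_one] at this
  have hl1v0 : 0 ≤ l1 v := Finset.sum_nonneg fun i _ => abs_nonneg _
  have hmax0 : 0 ≤ maxNorm (S - Scal) :=
    (abs_nonneg _).trans (entry_le_maxNorm (S - Scal) ⟨0, by omega⟩ ⟨0, by omega⟩)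
  -- maxNorm (Scal - S) = maxNorm (S - Scal)
  have hmaxswap : maxNorm (Scal - S) = maxNorm (S - Scal) := by
    unfold maxNorm
    congr 1; funext i; congr 1; funext j
    simp [Matrix.sub_apply, abs_sub_comm]
  -- v is feasible
  have hfeasv : linf (S.mulVec vtil - S.mulVec v) ≤ τ := by
    refine linf_le_of _ _ fun i => ?_
    have heq : S.mulVec vtil - S.mulVec v
        = (S.mulVec vtil - Scal.mulVec v) + (Scal - S).mulVec v := by
      rw [Matrix.sub_mulVec]; abel
    have h1 : |(S.mulVec vtil - Scal.mulVec v) i| ≤ c₂ * r :=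
      (abs_le_linf _ i).trans hvtil
    have h2 : |(Scal - S).mulVec v i| ≤ (c₁ * r) * Real.sqrt s := by
      refine (abs_mulVec_le_maxNorm_l1 _ _ i).trans ?_
      rw [hmaxswap]
      exact mul_le_mul hS_close hl1v hl1v0 (by positivity)
    have habs : |(S.mulVec vtil - S.mulVec v) i|
        ≤ |(S.mulVec vtil - Scal.mulVec v) i| + |(Scal - S).mulVec v i| := by
      rw [heq]; exact abs_add_le _ _
    have hbound : c₂ * r + c₁ * r * Real.sqrt s ≤ τ := by
      have : c₁ * r * Real.sqrt s ≤ c₁ * r * s :=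
        mul_le_mul_of_nonneg_left hss (by positivity)
      nlinarith [hτ]
    linarith [habs, h1, h2]
  have hl1hat : l1 vhat ≤ Real.sqrt s := (hmin v hfeasv).trans hl1v
  have hl1hat0 : 0 ≤ l1 vhat := Finset.sum_nonneg fun i _ => abs_nonneg _
  -- ‖Scal (vhat - v)‖_∞ ≤ 2τ
  have hB : ∀ i, |Scal.mulVec (vhat - v) i| ≤ 2 * τ := by
    intro i
    have heq : Scal.mulVec (vhat - v)
        = (Scal - S).mulVec vhat + (S.mulVec vhat - S.mulVec vtil)
          + (S.mulVec vtil - Scal.mulVec v) := by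
      rw [Matrix.mulVec_sub, Matrix.sub_mulVec]; abel
    have h1 : |(Scal - S).mulVec vhat i| ≤ (c₁ * r) * Real.sqrt s := by
      refine (abs_mulVec_le_maxNorm_l1 _ _ i).trans ?_
      rw [hmaxswap]
      exact mul_le_mul hS_close hl1hat hl1hat0 (by positivity)
    have h2 : |(S.mulVec vhat - S.mulVec vtil) i| ≤ τ := by
      have : |(S.mulVec vhat - S.mulVec vtil) i|
          = |(S.mulVec vtil - S.mulVec vhat) i| := by
        simp [Pi.sub_apply, abs_sub_comm]
      rw [this]
      exact (abs_le_linf _ i).trans hfeas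
    have h3 : |(S.mulVec vtil - Scal.mulVec v) i| ≤ c₂ * r :=
      (abs_le_linf _ i).trans hvtil
    have habs : |Scal.mulVec (vhat - v) i|
        ≤ |(Scal - S).mulVec vhat i| + |(S.mulVec vhat - S.mulVec vtil) i|
          + |(S.mulVec vtil - Scal.mulVec v) i| := by
      rw [heq]
      exact (abs_add_le _ _).trans (by gcongr; exact abs_add_le _ _)
    have hbound : (c₁ * r) * Real.sqrt s + τ + c₂ * r ≤ 2 * τ := by
      have : c₁ * r * Real.sqrt s ≤ c₁ * r * s :=
        mul_le_mul_of_nonneg_left hss (by positivity)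
      nlinarith [hτ]
    linarith [habs, h1, h2, h3]
  -- ‖vhat - v‖_∞ ≤ M₀ * (2τ)
  have hdet : IsUnit Scal.det := isUnit_iff_ne_zero.mpr (ne_of_gt hScal_pd.det_pos)
  have hrec : Scal⁻¹.mulVec (Scal.mulVec (vhat - v)) = vhat - v := by
    rw [Matrix.mulVec_mulVec, Matrix.nonsing_inv_mul _ hdet, Matrix.one_mulVec]
  have hinvsymm : (Scal⁻¹).IsSymm := by
    unfold Matrix.IsSymm
    rw [Matrix.transpose_nonsing_inv, hScal_symm]
  have hC : ∀ i, |(vhat - v) i| ≤ M₀ * (2 * τ) := by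
    intro i
    have h1 : |Scal⁻¹.mulVec (Scal.mulVec (vhat - v)) i| ≤ colNorm1 Scal⁻¹ * (2 * τ) :=
      abs_mulVec_le_colNorm1_bound _ hinvsymm _ _ hB i
    rw [hrec] at h1
    exact h1.trans (mul_le_mul_of_nonneg_right hScal_inv (by linarith))
  -- cone condition
  have hsplit : ∀ (f : Fin p → ℝ), ∑ i, f i = ∑ i ∈ T, f i + ∑ i ∈ Tᶜ, f i := by
    intro f
    rw [Finset.sum_add_sum_compl]
  have hcone : ∑ i ∈ Tᶜ, |vhat i - v i| ≤ ∑ i ∈ T, |vhat i - v i| := by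
    have hkey : l1 vhat ≤ l1 v := hmin v hfeasv
    rw [l1, l1, hsplit (fun i => |vhat i|), hsplit (fun i => |v i|)] at hkey
    have hvc : ∑ i ∈ Tᶜ, |v i| = 0 := by
      refine Finset.sum_eq_zero fun i hi => ?_
      rw [hvzero i (Finset.mem_compl.mp hi), abs_zero]
    have htri : ∀ i ∈ T, |v i| - |vhat i - v i| ≤ |vhat i| := by
      intro i _
      have h1 := abs_sub_abs_le_abs_sub (v i) (vhat i)
      have h2 : |v i - vhat i| = |vhat i - v i| := abs_sub_comm _ _
      linarith
    have h1 : ∑ i ∈ T, |v i| - ∑ i ∈ T, |vhat i - v i| ≤ ∑ i ∈ T, |vhat i| := by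
      rw [← Finset.sum_sub_distrib]
      exact Finset.sum_le_sum htri
    have h2 : ∑ i ∈ Tᶜ, |vhat i| = ∑ i ∈ Tᶜ, |vhat i - v i| := by
      refine Finset.sum_congr rfl fun i hi => ?_
      rw [hvzero i (Finset.mem_compl.mp hi), sub_zero]
    linarith [hkey, h1, h2.symm.le, hvc]
  -- finish
  set L := l2 (vhat - v) with hL_def
  have hL0 : 0 ≤ L := Real.sqrt_nonneg _
  have hsum0 : 0 ≤ ∑ i, (vhat i - v i) ^ 2 := Finset.sum_nonneg fun i _ => sq_nonneg _
  have hL2 : L ^ 2 = ∑ i, (vhat i - v i) ^ 2 := by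
    rw [hL_def, l2]
    simp only [Pi.sub_apply]
    exact Real.sq_sqrt hsum0
  have hL_eq : L = Real.sqrt (∑ i, (vhat i - v i) ^ 2) := by
    rw [hL_def]; simp only [l2, Pi.sub_apply]
  have hl1h : ∑ i, |vhat i - v i| ≤ 2 * Real.sqrt s * L := by
    have hTbound : ∑ i ∈ T, |vhat i - v i| ≤ Real.sqrt s * L := by
      have := sum_abs_le_sqrt_card (fun i => vhat i - v i) T hTcard
      rw [hL_eq]
      exact this
    calc ∑ i, |vhat i - v i|
        = ∑ i ∈ T, |vhat i - v i| + ∑ i ∈ Tᶜ, |vhat i - v i| := hsplit _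
      _ ≤ 2 * ∑ i ∈ T, |vhat i - v i| := by linarith
      _ ≤ 2 * (Real.sqrt s * L) := by linarith
      _ = 2 * Real.sqrt s * L := by ring
  have hsq : L ^ 2 ≤ M₀ * (2 * τ) * (2 * Real.sqrt s * L) := by
    rw [hL2]
    have h1 : ∑ i, (vhat i - v i) ^ 2 ≤ ∑ i, M₀ * (2 * τ) * |vhat i - v i| := by
      refine Finset.sum_le_sum fun i _ => ?_
      have := hC i
      simp only [Pi.sub_apply] at this
      nlinarith [abs_nonneg (vhat i - v i), sq_abs (vhat i - v i)]
    rw [← Finset.mul_sum] at h1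
    refine h1.trans ?_
    exact mul_le_mul_of_nonneg_left hl1h (by positivity)
  have hLbound : L ≤ 4 * Real.sqrt s * M₀ * τ := by
    rcases eq_or_lt_of_le hL0 with h0 | h0
    · rw [← h0]; positivity
    · nlinarith [hsq]
  -- enlarge the constant
  have h10 : (1:ℝ) ≤ Real.sqrt 10 := by
    nlinarith [Real.sq_sqrt (by norm_num : (0:ℝ) ≤ 10), Real.sqrt_nonneg (10:ℝ)]
  have hc0 : 0 ≤ Real.sqrt (4 + 2 * Real.sqrt 10) := Real.sqrt_nonneg _
  refine hLbound.trans ?_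
  nlinarith [mul_nonneg (mul_nonneg hsqs0 hM₀.le) hτ0, hc0, h10]
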